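/- Let K be a field of characteristic 2 with a discrete valuation v : Kˣ → ℤ, valuation ring O, and let a, b, γ ∈ Kˣ and an integer n ≥ 1 be such that v(b) = 1, v(γ) = 0, γ^{4n} = 1, and a ≡ γ (mod b²·O). Set x = b^{-1} + 1. Then v(f(x)) = −1 and v(g(x)) = 1; in particular v(f(x)·g(x)) is even. Here f(x) = a^{-4n}·b·x² + x + a·b^{-1} and g(x) = a^{-8n}·b²·x² + a^{-4n}·b·x + a^{1-4n} + γ. -/

import Mathlib

/-- A discrete valuation on a field `K`: a surjective group homomorphism `v : Kˣ → ℤ`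
(encoded as an integer-valued function on `K`, multiplicative and surjective on nonzero
elements) satisfying `v(x + y) ≥ min (v x) (v y)`. -/
structure DiscreteVal (K : Type*) [Field K] where
  /-- the underlying valuation function (its values at `0` are irrelevant) -/
  v : K → ℤ
  map_mul : ∀ x y : K, x ≠ 0 → y ≠ 0 → v (x * y) = v x + v y
  min_le_add : ∀ x y : K, x ≠ 0 → y ≠ 0 → x + y ≠ 0 → min (v x) (v y) ≤ v (x + y)
  surjective : ∀ m : ℤ, ∃ x : K, x ≠ 0 ∧ v x = m

/-- `f(x) = a^{-4n}·b·x² + x + a·b⁻¹`. -/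
noncomputable def fDV {K : Type*} [Field K] (a b : K) (n : ℤ) (x : K) : K :=
  a ^ (-(4 * n)) * b * x ^ 2 + x + a * b⁻¹

/-- `g(x) = a^{-8n}·b²·x² + a^{-4n}·b·x + a^{1-4n} + γ`. -/
noncomputable def gDV {K : Type*} [Field K] (a b γ : K) (n : ℤ) (x : K) : K :=
  a ^ (-(8 * n)) * b ^ 2 * x ^ 2 + a ^ (-(4 * n)) * b * x + a ^ (1 - 4 * n) + γ

/-! In characteristic 2, with `x = b⁻¹ + 1`, `a = γ + b²o` and `ε = a^{-4n} - 1`, one has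
`x² = b⁻² + 1`, so that `b·f(x) = a + (b + b² + (1 + b²)ε)` and
`g(x) = b + (((1 + b²)ε + 1 + b + a)ε + b²(1 + o))`.
Since `γ^{4n} = 1` and `a/γ ≡ 1 mod b²`, also `ε ≡ 0 mod b²`. Hence `b·f(x)` is a unit and
`g(x) ≡ b mod b²`. -/

namespace AddValuation

section Ring

variable {R Γ₀ : Type*} [Ring R] [LinearOrderedAddCommMonoidWithTop Γ₀]
  (v : AddValuation R Γ₀)

theorem add_le_map_mul {x y : R} {m k : Γ₀} (hx : m ≤ v x) (hy : k ≤ v y) :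
    m + k ≤ v (x * y) :=
  v.map_mul x y ▸ add_le_add hx hy

theorem le_map_pow_sub_one {x : R} {m : Γ₀} (hx : 0 ≤ v x) (h : m ≤ v (x - 1)) (k : ℕ) :
    m ≤ v (x ^ k - 1) := by
  induction k with
  | zero => simp
  | succ k ih =>
    have hmul : m ≤ v ((x ^ k - 1) * x) := by simpa using v.add_le_map_mul ih hx
    simpa [pow_succ, sub_mul] using v.map_le_add hmul h

end Ring

section Field

variable {K Γ₀ : Type*} [Field K] [LinearOrderedAddCommGroupWithTop Γ₀] (v : AddValuation K Γ₀)

theorem le_map_zpow_sub_one {x : K} {m : Γ₀} (hx : v x = 0) (h : m ≤ v (x - 1)) (k : ℤ) :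
    m ≤ v (x ^ k - 1) := by
  have hx0 : x ≠ 0 := v.ne_top_iff.1 (by simp [hx])
  obtain ⟨j, rfl | rfl⟩ := k.eq_nat_or_neg
  · simpa using v.le_map_pow_sub_one hx.ge h j
  · have hxj : v (x ^ j)⁻¹ = 0 := by simp [v.map_pow, hx]
    have key : x ^ (-(j : ℤ)) - 1 = (1 - x ^ j) * (x ^ j)⁻¹ := by
      rw [zpow_neg, zpow_natCast, sub_mul, one_mul, mul_inv_cancel₀ (pow_ne_zero j hx0)]
    have hj : m ≤ v (1 - x ^ j) := v.map_sub_swap (x ^ j) 1 ▸ v.le_map_pow_sub_one hx.ge h j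
    have := v.add_le_map_mul hj hxj.ge
    rwa [add_zero, ← key] at this

end Field

end AddValuation

namespace DiscreteVal

variable {K : Type*} [Field K] (w : DiscreteVal K)

theorem v_one : w.v 1 = 0 := by
  have h := w.map_mul 1 1 one_ne_zero one_ne_zero
  rw [mul_one] at h
  omega

open Classical in
/-- `w.v` with the junk value at `0` replaced by `⊤`, as a Mathlib `AddValuation`. -/
noncomputable def ord : AddValuation K (WithTop ℤ) :=
  AddValuation.of (fun x ↦ if x = 0 then ⊤ else (w.v x : WithTop ℤ)) (by simp)
    (by simp [w.v_one])
    (by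
      intro x y
      by_cases hx : x = 0; · simp [hx]
      by_cases hy : y = 0; · simp [hy]
      by_cases hxy : x + y = 0; · simp [hxy]
      simpa [hx, hy, hxy] using w.min_le_add x y hx hy hxy)
    (by
      intro x y
      by_cases hx : x = 0; · simp [hx]
      by_cases hy : y = 0; · simp [hy]
      simp [hx, hy, w.map_mul x y hx hy])

theorem ord_eq_coe_iff {x : K} {m : ℤ} : w.ord x = m ↔ x ≠ 0 ∧ w.v x = m := by
  by_cases hx : x = 0 <;> simp [ord, hx]

theorem ord_nonneg_iff {x : K} : 0 ≤ w.ord x ↔ x = 0 ∨ 0 ≤ w.v x := by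
  by_cases hx : x = 0 <;> simp [ord, hx]

end DiscreteVal

section CharTwo

variable {K : Type*} [Field K] [CharP K 2]

theorem mul_fDV_inv_add_one {a b : K} (hb : b ≠ 0) (n : ℤ) :
    b * fDV a b n (b⁻¹ + 1) = a + (b + b ^ 2 + (1 + b ^ 2) * (a ^ (-(4 * n)) - 1)) := by
  unfold fDV
  field_simp
  linear_combination (a ^ (-(4 * n)) * b + 1) * CharTwo.two_eq_zero (R := K)

theorem gDV_inv_add_one {a b γ o : K} (ha : a ≠ 0) (hb : b ≠ 0) (hao : a = γ + b ^ 2 * o)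
    (n : ℤ) :
    gDV a b γ n (b⁻¹ + 1) = b + (((1 + b ^ 2) * (a ^ (-(4 * n)) - 1) + 1 + b + a)
      * (a ^ (-(4 * n)) - 1) + b ^ 2 * (1 + o)) := by
  have h8 : a ^ (-(8 * n)) = (a ^ (-(4 * n))) ^ 2 := by
    rw [← zpow_natCast, ← zpow_mul]
    ring_nf
  have h1 : a ^ (1 - 4 * n) = a * a ^ (-(4 * n)) := by
    rw [sub_eq_add_neg, zpow_add₀ ha, zpow_one]
  unfold gDV
  rw [h8, h1]
  generalize a ^ (-(4 * n)) = A
  subst hao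
  field_simp
  linear_combination (A + A ^ 2 * b + γ + A * b ^ 2 - b ^ 2) * CharTwo.two_eq_zero (R := K)

end CharTwo

namespace AddValuation

variable {K : Type*} [Field K] (v : AddValuation K (WithTop ℤ)) {a b γ o : K}

theorem map_sq_of_eq_one (hb : v b = 1) : v (b ^ 2) = 2 := by
  rw [v.map_pow, hb, two_nsmul, one_add_one_eq_two]

theorem two_le_map_sq_mul (hb : v b = 1) (ho : 0 ≤ v o) : 2 ≤ v (b ^ 2 * o) :=
  add_zero (2 : WithTop ℤ) ▸ v.add_le_map_mul (v.map_sq_of_eq_one hb).ge ho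

theorem map_add_sq_mul (hb : v b = 1) (hγ : v γ = 0) (ho : 0 ≤ v o) :
    v (γ + b ^ 2 * o) = 0 := by
  rw [v.map_add_eq_of_lt_left, hγ]
  exact hγ ▸ lt_of_lt_of_le (by norm_num) (v.two_le_map_sq_mul hb ho)

theorem two_le_map_zpow_sub_one {k : ℤ} (hγk : γ ^ k = 1) (hb : v b = 1) (hγ : v γ = 0)
    (ho : 0 ≤ v o) : 2 ≤ v ((γ + b ^ 2 * o) ^ k - 1) := by
  have hγ0 : γ ≠ 0 := v.ne_top_iff.1 (by simp [hγ])
  have hquot : (γ + b ^ 2 * o) / γ - 1 = b ^ 2 * o / γ := by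
    field_simp
    ring
  have h := v.le_map_zpow_sub_one (x := (γ + b ^ 2 * o) / γ) (m := 2)
    (by rw [v.map_div, v.map_add_sq_mul hb hγ ho, hγ, sub_zero])
    (by rw [hquot, v.map_div, hγ, sub_zero]; exact v.two_le_map_sq_mul hb ho) k
  rwa [div_zpow, hγk, div_one] at h

theorem nonneg_map_one_add_sq (hb : v b = 1) : 0 ≤ v (1 + b ^ 2) :=
  v.map_le_add v.map_one.ge ((v.map_sq_of_eq_one hb).ge.trans' (by norm_num))

theorem two_le_map_one_add_sq_mul {ε : K} (hb : v b = 1) (hε : 2 ≤ v ε) :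
    2 ≤ v ((1 + b ^ 2) * ε) :=
  zero_add (2 : WithTop ℤ) ▸ v.add_le_map_mul (v.nonneg_map_one_add_sq hb) hε

theorem map_mul_fDV_inv_add_one [CharP K 2] {n : ℤ} (hb : v b = 1) (ha : v a = 0)
    (hε : 2 ≤ v (a ^ (-(4 * n)) - 1)) : v (b * fDV a b n (b⁻¹ + 1)) = 0 := by
  have hb0 : b ≠ 0 := v.ne_top_iff.1 (by simp [hb])
  have htail : 1 ≤ v (b + b ^ 2 + (1 + b ^ 2) * (a ^ (-(4 * n)) - 1)) :=
    v.map_le_add (v.map_le_add hb.ge ((v.map_sq_of_eq_one hb).ge.trans' (by norm_num)))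
      ((v.two_le_map_one_add_sq_mul hb hε).trans' (by norm_num))
  rw [mul_fDV_inv_add_one hb0, v.map_add_eq_of_lt_left (ha ▸ htail.trans_lt' (by norm_num)), ha]

theorem map_gDV_inv_add_one [CharP K 2] {n : ℤ} (hb : v b = 1) (ha : v a = 0)
    (ho : 0 ≤ v o) (hao : a = γ + b ^ 2 * o) (hε : 2 ≤ v (a ^ (-(4 * n)) - 1)) :
    v (gDV a b γ n (b⁻¹ + 1)) = 1 := by
  have ha0 : a ≠ 0 := v.ne_top_iff.1 (by simp [ha])
  have hb0 : b ≠ 0 := v.ne_top_iff.1 (by simp [hb])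
  have hcoeff : 0 ≤ v ((1 + b ^ 2) * (a ^ (-(4 * n)) - 1) + 1 + b + a) :=
    v.map_le_add (v.map_le_add (v.map_le_add
      ((v.two_le_map_one_add_sq_mul hb hε).trans' (by norm_num)) v.map_one.ge)
      (hb.ge.trans' (by norm_num))) ha.ge
  have htail : 2 ≤ v (((1 + b ^ 2) * (a ^ (-(4 * n)) - 1) + 1 + b + a)
      * (a ^ (-(4 * n)) - 1) + b ^ 2 * (1 + o)) :=
    v.map_le_add (zero_add (2 : WithTop ℤ) ▸ v.add_le_map_mul hcoeff hε)
      (v.two_le_map_sq_mul hb (v.map_le_add v.map_one.ge ho))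
  rw [gDV_inv_add_one ha0 hb0 hao, v.map_add_eq_of_lt_left (hb ▸ htail.trans_lt' (by norm_num)),
    hb]

end AddValuation

theorem val_f_neg_one_and_val_g_one_at_b_general (K : Type*) [Field K] [CharP K 2] (w : DiscreteVal K)
    (a b γ : K) (hb0 : b ≠ 0) (hγ0 : γ ≠ 0) (n : ℤ)
    (hb : w.v b = 1) (hγ : w.v γ = 0) (hγpow : γ ^ (4 * n) = 1)
    (hab : ∃ o : K, (o = 0 ∨ 0 ≤ w.v o) ∧ a = γ + b ^ 2 * o)
    (x : K) (hx : x = b⁻¹ + 1) :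
    (fDV a b n x ≠ 0 ∧ w.v (fDV a b n x) = -1) ∧
    (gDV a b γ n x ≠ 0 ∧ w.v (gDV a b γ n x) = 1) ∧
    Even (w.v (fDV a b n x * gDV a b γ n x)) := by
  obtain ⟨o, ho, hao⟩ := hab
  subst hx
  have hvb : w.ord b = 1 := by simpa using w.ord_eq_coe_iff.2 ⟨hb0, hb⟩
  have hvγ : w.ord γ = 0 := by simpa using w.ord_eq_coe_iff.2 ⟨hγ0, hγ⟩
  have hvo : 0 ≤ w.ord o := w.ord_nonneg_iff.2 ho
  have hva : w.ord a = 0 := hao ▸ w.ord.map_add_sq_mul hvb hvγ hvo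
  have hε : 2 ≤ w.ord (a ^ (-(4 * n)) - 1) :=
    hao ▸ w.ord.two_le_map_zpow_sub_one (by rw [zpow_neg, hγpow, inv_one]) hvb hvγ hvo
  obtain ⟨hbf0, hvbf⟩ := w.ord_eq_coe_iff.1 <|
    (w.ord.map_mul_fDV_inv_add_one hvb hva hε).trans (WithTop.coe_zero (α := ℤ)).symm
  obtain ⟨hg0, hvg⟩ := w.ord_eq_coe_iff.1 <|
    (w.ord.map_gDV_inv_add_one hvb hva hvo hao hε).trans (WithTop.coe_one (α := ℤ)).symm
  have hf0 := right_ne_zero_of_mul hbf0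
  have hvf : w.v (fDV a b n (b⁻¹ + 1)) = -1 := by
    rw [w.map_mul b _ hb0 hf0, hb] at hvbf
    omega
  refine ⟨⟨hf0, hvf⟩, ⟨hg0, hvg⟩, ?_⟩
  rw [w.map_mul _ _ hf0 hg0, hvf, hvg]
  exact ⟨0, rfl⟩

/-- Local solvability computation at the place `v_b` (Lemma 3.1 of the paper): with
`x = b⁻¹ + 1`, `v(f(x)) = −1` and `v(g(x)) = 1`; in particular `v(f(x)·g(x))` is even.
Here `O` denotes the valuation ring `{x : v x ≥ 0} ∪ {0}`. -/
theorem val_f_neg_one_and_val_g_one_at_b (K : Type*) [Field K] [CharP K 2] (w : DiscreteVal K)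
    (a b γ : K) (ha0 : a ≠ 0) (hb0 : b ≠ 0) (hγ0 : γ ≠ 0) (n : ℤ) (hn : 1 ≤ n)
    (hb : w.v b = 1) (hγ : w.v γ = 0) (hγpow : γ ^ (4 * n) = 1)
    (hab : ∃ o : K, (o = 0 ∨ 0 ≤ w.v o) ∧ a = γ + b ^ 2 * o)
    (x : K) (hx : x = b⁻¹ + 1) :
    (fDV a b n x ≠ 0 ∧ w.v (fDV a b n x) = -1) ∧
    (gDV a b γ n x ≠ 0 ∧ w.v (gDV a b γ n x) = 1) ∧
    Even (w.v (fDV a b n x * gDV a b γ n x)) :=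
  val_f_neg_one_and_val_g_one_at_b_general K w a b γ hb0 hγ0 n hb hγ hγpow hab x hx
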